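/- arXiv:2601.18573 — 6 statements merged into one kernel-verified Lean document; each statement's English description precedes it below -/
import Mathlib

section
/- Let I be a Stable Roommates instance with agent set A and acceptability graph G = (A, E), and let D ⊆ A. If the graph G' = (A, E \ E[A\D]) obtained by deleting all edges between two agents outside D is bipartite, then there exists a matching M of I such that no agent in D is contained in any blocking pair of M. -/
/-!
Only edges meeting `D` matter for blocking pairs at agents of `D`, so restricting acceptability
to them yields a bipartite (stable marriage) instance whose stable matchings do the job.

A stable matching of a bipartite instance is read off a fixed point of the deferred-acceptance
operator on sets `R` of rejections `(m, w)`: a man `m` *reaches* a woman `w` once every woman he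
prefers to her has rejected him, and the operator maps `R` to the pairs `(m, w)` such that `w` is
reached by a man she prefers to `m`. It is monotone, hence has a fixed point (Knaster–Tarski), and
there each man is matched to his favourite woman who has not rejected him.
-/

/-- A blocking pair of matching `M` (represented as an involution, with `M a = a`
meaning `a` is unmatched): a mutually acceptable pair where each agent prefers the
other to their current situation. -/
def SR.blocks {A : Type*} (accept : A → A → Prop) (pref : A → A → A → Prop)
    (M : A → A) (a b : A) : Prop :=
  accept a b ∧ (M a = a ∨ pref a b (M a)) ∧ (M b = b ∨ pref b a (M b))

theorem exists_mem_forall_not_rel_of_asymm {A : Type*} [Finite A] {r : A → A → Prop}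
    (htrans : Transitive r) (hasymm : ∀ a b, r a b → ¬ r b a) {s : Set A} (hs : s.Nonempty) :
    ∃ a ∈ s, ∀ x ∈ s, ¬ r x a :=
  haveI : IsTrans A r := ⟨fun _ _ _ => @htrans _ _ _⟩
  haveI : Std.Irrefl r := ⟨fun a h => hasymm a a h h⟩
  (Finite.wellFounded_of_trans_of_irrefl r).has_min s hs

theorem exists_involutive_of_symm_of_functional {α : Type*} (r : α → α → Prop)
    (hsymm : ∀ a b, r a b → r b a) (hfun : ∀ a b c, r a b → r a c → b = c) :
    ∃ M : α → α, Function.Involutive M ∧ (∀ a b, r a b → M a = b) ∧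
      ∀ a, M a = a ∨ r a (M a) := by
  classical
  let M a := if h : ∃ b, r a b then h.choose else a
  have hM : ∀ a b, r a b → M a = b := fun a b hab => by
    have h : ∃ b, r a b := ⟨b, hab⟩
    simp only [M, dif_pos h]
    exact hfun _ _ _ h.choose_spec hab
  have hM' : ∀ a, M a = a ∨ r a (M a) := fun a => by
    by_cases h : ∃ b, r a b
    · exact .inr (hM a _ h.choose_spec ▸ h.choose_spec)
    · exact .inl (dif_neg h)
  refine ⟨M, fun a => ?_, hM, hM'⟩
  rcases hM' a with h | h
  · rw [h, h]
  · exact hM _ _ (hsymm _ _ h)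

namespace StableMarriage

variable {A : Type*} (acc : A → A → Prop) (pref : A → A → A → Prop) (f : A → Bool)

def Reaches (R : Set (A × A)) (m w : A) : Prop :=
  f m = true ∧ acc m w ∧ ∀ w', acc m w' → pref m w' w → (m, w') ∈ R

theorem Reaches.mono {R R' : Set (A × A)} (hRR' : R ⊆ R') {m w : A}
    (h : Reaches acc pref f R m w) : Reaches acc pref f R' m w :=
  ⟨h.1, h.2.1, fun w' hw' hpref => hRR' (h.2.2 w' hw' hpref)⟩

def rejections : Set (A × A) →o Set (A × A) where
  toFun R := {p | ∃ m, Reaches acc pref f R m p.2 ∧ pref p.2 m p.1}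
  monotone' _ _ hRR' _ := fun ⟨m, hm, hpref⟩ => ⟨m, hm.mono acc pref f hRR', hpref⟩

def Proposes (R : Set (A × A)) (m w : A) : Prop :=
  Reaches acc pref f R m w ∧ (m, w) ∉ R

variable {acc pref f} {R : Set (A × A)}

theorem Proposes.right_unique
    (htotal : ∀ a b c, acc a b → acc a c → b ≠ c → pref a b c ∨ pref a c b) {m w w' : A}
    (h : Proposes acc pref f R m w) (h' : Proposes acc pref f R m w') : w = w' := by
  by_contra hne
  rcases htotal m w w' h.1.2.1 h'.1.2.1 hne with hpref | hpref
  · exact h.2 (h'.1.2.2 w h.1.2.1 hpref)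
  · exact h'.2 (h.1.2.2 w' h'.1.2.1 hpref)

theorem Proposes.left_unique (hR : rejections acc pref f R = R)
    (hsymm : ∀ a b, acc a b → acc b a)
    (htotal : ∀ a b c, acc a b → acc a c → b ≠ c → pref a b c ∨ pref a c b) {m m' w : A}
    (h : Proposes acc pref f R m w) (h' : Proposes acc pref f R m' w) : m = m' := by
  by_contra hne
  rcases htotal w m m' (hsymm _ _ h.1.2.1) (hsymm _ _ h'.1.2.1) hne with hpref | hpref
  · exact h'.2 (hR ▸ ⟨m, h.1, hpref⟩)
  · exact h.2 (hR ▸ ⟨m', h'.1, hpref⟩)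

theorem exists_proposes_of_notMem [Finite A] (htrans : ∀ a, Transitive (pref a))
    (hasymm : ∀ a b c, pref a b c → ¬ pref a c b)
    (htotal : ∀ a b c, acc a b → acc a c → b ≠ c → pref a b c ∨ pref a c b) {m w : A}
    (hm : f m = true) (hacc : acc m w) (hmw : (m, w) ∉ R) :
    ∃ w₀, Proposes acc pref f R m w₀ ∧ (w₀ = w ∨ pref m w₀ w) := by
  obtain ⟨w₀, ⟨hacc₀, hmw₀⟩, hbest⟩ := exists_mem_forall_not_rel_of_asymm (htrans m)
    (hasymm m) (s := {w' | acc m w' ∧ (m, w') ∉ R}) ⟨w, hacc, hmw⟩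
  refine ⟨w₀, ⟨⟨hm, hacc₀, fun w' hw' hpref => ?_⟩, hmw₀⟩, ?_⟩
  · by_contra hw'R
    exact hbest w' ⟨hw', hw'R⟩ hpref
  · by_cases hw : w₀ = w
    · exact .inl hw
    · exact .inr ((htotal m w₀ w hacc₀ hacc hw).resolve_right (hbest w ⟨hacc, hmw⟩))

/-- A rejected man was rejected in favour of the man actually proposing to `w`: take the best
man, in `w`'s eyes, among those reaching her. -/
theorem exists_proposes_of_mem [Finite A] (hR : rejections acc pref f R = R)
    (htrans : ∀ a, Transitive (pref a)) (hasymm : ∀ a b c, pref a b c → ¬ pref a c b)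
    {m w : A} (hmw : (m, w) ∈ R) : ∃ m₀, Proposes acc pref f R m₀ w ∧ pref w m₀ m := by
  rw [← hR] at hmw
  obtain ⟨m₀, ⟨hreach, hpref⟩, hbest⟩ := exists_mem_forall_not_rel_of_asymm (htrans w)
    (hasymm w) (s := {m' | Reaches acc pref f R m' w ∧ pref w m' m}) hmw
  refine ⟨m₀, ⟨hreach, fun hm₀w => ?_⟩, hpref⟩
  rw [← hR] at hm₀w
  obtain ⟨m', hm', hpref'⟩ := hm₀w
  exact hbest m' ⟨hm', htrans w hpref' hpref⟩ hpref'

end StableMarriage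

open StableMarriage in
theorem exists_stable_matching_of_bipartite {A : Type*} [Finite A]
    (acc : A → A → Prop) (pref : A → A → A → Prop)
    (hsymm : ∀ a b, acc a b → acc b a)
    (htrans : ∀ a, Transitive (pref a))
    (hasymm : ∀ a b c, pref a b c → ¬ pref a c b)
    (htotal : ∀ a b c, acc a b → acc a c → b ≠ c → pref a b c ∨ pref a c b)
    (f : A → Bool) (hf : ∀ a b, acc a b → f a ≠ f b) :
    ∃ M : A → A, Function.Involutive M ∧ (∀ a, M a ≠ a → acc a (M a)) ∧
      ∀ a b, ¬ SR.blocks acc pref M a b := by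
  set R := (rejections acc pref f).lfp
  have hR : rejections acc pref f R = R := (rejections acc pref f).map_lfp
  let Matched a b := Proposes acc pref f R a b ∨ Proposes acc pref f R b a
  have hfun : ∀ a b c, Matched a b → Matched a c → b = c := by
    rintro a b c (hab | hba) (hac | hca)
    · exact hab.right_unique htotal hac
    · exact absurd (hab.1.1.symm ▸ hca.1.1) (hf c a hca.1.2.1)
    · exact absurd (hac.1.1.symm ▸ hba.1.1) (hf b a hba.1.2.1)
    · exact hba.left_unique hR hsymm htotal hca
  obtain ⟨M, hinv, hM, hMself⟩ :=
    exists_involutive_of_symm_of_functional Matched (fun _ _ => Or.symm) hfun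
  have hMacc : ∀ a, M a ≠ a → acc a (M a) := fun a ha =>
    ((hMself a).resolve_left ha).elim (·.1.2.1) (hsymm _ _ ·.1.2.1)
  have hunblocked : ∀ m w, f m = true → ¬ SR.blocks acc pref M m w := by
    rintro m w hm ⟨hacc, hmw, hwm⟩
    by_cases hR_mw : (m, w) ∈ R
    · obtain ⟨m₀, hm₀, hpref⟩ := exists_proposes_of_mem hR htrans hasymm hR_mw
      rw [hM w m₀ (.inr hm₀)] at hwm
      rcases hwm with rfl | hwm
      · exact hf _ _ hm₀.1.2.1 rfl
      · exact hasymm w m₀ m hpref hwm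
    · obtain ⟨w₀, hw₀, hbest⟩ :=
        exists_proposes_of_notMem htrans hasymm htotal hm hacc hR_mw
      rw [hM m w₀ (.inl hw₀)] at hmw
      rcases hmw with rfl | hmw
      · exact hf _ _ hw₀.1.2.1 rfl
      · rcases hbest with rfl | hbest
        · exact hasymm _ _ _ hmw hmw
        · exact hasymm m w₀ w hbest hmw
  refine ⟨M, hinv, hMacc, fun a b hab => ?_⟩
  cases hfa : f a
  · have hfb : f b = true := by simpa [hfa] using (hf a b hab.1).symm
    exact hunblocked b a hfb ⟨hsymm a b hab.1, hab.2.2, hab.2.1⟩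
  · exact hunblocked a b hfa hab

theorem stmt1_general {A : Type*} [Fintype A]
    (accept : A → A → Prop) (pref : A → A → A → Prop)
    (accept_symm : ∀ a b, accept a b → accept b a)
    (pref_trans : ∀ a, Transitive (pref a))
    (pref_asymm : ∀ a b c, pref a b c → ¬ pref a c b)
    (pref_total : ∀ a b c, accept a b → accept a c → b ≠ c → pref a b c ∨ pref a c b)
    (D : Set A)
    (hbip : ∃ f : A → Bool, ∀ a b, accept a b → (a ∈ D ∨ b ∈ D) → f a ≠ f b) :
    ∃ M : A → A, Function.Involutive M ∧ (∀ a, M a ≠ a → accept a (M a)) ∧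
      ∀ d ∈ D, ∀ b, ¬ SR.blocks accept pref M d b := by
  obtain ⟨f, hf⟩ := hbip
  obtain ⟨M, hinv, hMacc, hstable⟩ :=
    exists_stable_matching_of_bipartite (fun a b => accept a b ∧ (a ∈ D ∨ b ∈ D)) pref
      (fun a b h => ⟨accept_symm a b h.1, h.2.symm⟩) pref_trans pref_asymm
      (fun a b c hb hc hne => pref_total a b c hb.1 hc.1 hne) f (fun a b h => hf a b h.1 h.2)
  exact ⟨M, hinv, fun a ha => (hMacc a ha).1,
    fun d hd b hblock => hstable d b ⟨⟨hblock.1, .inl hd⟩, hblock.2⟩⟩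

/-- Let `I` be a Stable Roommates instance with agent set `A` (with strict preferences:
`pref a b c` means `a` prefers `b` to `c`) and let `D ⊆ A`. If the graph obtained from the
acceptability graph by deleting all edges between two agents outside `D` is bipartite,
then there exists a matching `M` of `I` such that no agent in `D` is contained in any
blocking pair of `M`. -/
theorem stmt1 {A : Type*} [Fintype A]
    (accept : A → A → Prop) (pref : A → A → A → Prop)
    (accept_symm : ∀ a b, accept a b → accept b a)
    (accept_irrefl : ∀ a, ¬ accept a a)
    (pref_acc : ∀ a b c, pref a b c → accept a b ∧ accept a c)
    (pref_trans : ∀ a, Transitive (pref a))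
    (pref_asymm : ∀ a b c, pref a b c → ¬ pref a c b)
    (pref_total : ∀ a b c, accept a b → accept a c → b ≠ c → pref a b c ∨ pref a c b)
    (D : Set A)
    (hbip : ∃ f : A → Bool, ∀ a b, accept a b → (a ∈ D ∨ b ∈ D) → f a ≠ f b) :
    ∃ M : A → A, Function.Involutive M ∧ (∀ a, M a ≠ a → accept a (M a)) ∧
      ∀ d ∈ D, ∀ b, ¬ SR.blocks accept pref M d b :=
  stmt1_general accept pref accept_symm pref_trans pref_asymm pref_total D hbip
end

section
/- Every bipartite Stable Marriage instance with strict, possibly incomplete preference lists admits a stable matching, i.e., a matching with no blocking pair. -/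
/-- A blocking pair of matching `M` (represented as an involution, with `M a = a`
meaning `a` is unmatched). -/
def SM.blocks {A : Type*} (accept : A → A → Prop) (pref : A → A → A → Prop)
    (M : A → A) (a b : A) : Prop :=
  accept a b ∧ (M a = a ∨ pref a b (M a)) ∧ (M b = b ∨ pref b a (M b))


/-! Induction on the acceptability relation. If nobody is the first choice of two different
agents, giving every agent on side `true` his first choice is a matching, and it is stable
because no agent on side `true` wants to move. Otherwise some `w` is the first choice of
`m₁ ≠ m₂` and prefers `m₁`. Delete the pair `{m₂, w}` and take a stable matching of the
smaller instance: there `w` does at least as well as `m₁` (else `{m₁, w}` would block, `w`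
being `m₁`'s first choice), so `{m₂, w}` does not block it either. -/

lemma Function.exists_involutive_of_symm_of_unique {α : Type*} {P : α → α → Prop}
    (symm : ∀ a b, P a b → P b a)
    (unique : ∀ a b c, P a b → P a c → b = c) :
    ∃ M : α → α, Function.Involutive M ∧ (∀ a b, P a b → M a = b) ∧
      ∀ a, M a ≠ a → P a (M a) := by
  classical
  let M : α → α := fun a => if h : ∃ b, P a b then h.choose else a
  have of_rel : ∀ a b, P a b → M a = b := by
    intro a b hab
    have h : ∃ b, P a b := ⟨b, hab⟩
    rw [show M a = h.choose from dif_pos h]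
    exact unique a _ _ h.choose_spec hab
  have partner : ∀ a, M a ≠ a → P a (M a) := by
    intro a ha
    by_cases h : ∃ b, P a b
    · obtain ⟨b, hb⟩ := h
      rwa [of_rel a b hb]
    · exact absurd (dif_neg h) ha
  refine ⟨M, fun a => ?_, of_rel, partner⟩
  by_cases ha : M a = a
  · rw [ha, ha]
  · exact of_rel _ _ (symm _ _ (partner a ha))

namespace SM

variable {A : Type*}

def IsStable (accept : A → A → Prop) (pref : A → A → A → Prop) (M : A → A) : Prop :=
  Function.Involutive M ∧ (∀ a, M a ≠ a → accept a (M a)) ∧ ∀ a b, ¬ blocks accept pref M a b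

def IsFirstChoice (accept : A → A → Prop) (pref : A → A → A → Prop) (a b : A) : Prop :=
  accept a b ∧ ∀ c, accept a c → c ≠ b → pref a b c

section

variable {accept : A → A → Prop} {pref : A → A → A → Prop}

lemma blocks_comm (accept_symm : ∀ a b, accept a b → accept b a) {M : A → A} {a b : A}
    (h : blocks accept pref M a b) : blocks accept pref M b a :=
  ⟨accept_symm a b h.1, h.2.2, h.2.1⟩

lemma exists_isFirstChoice [Finite A] {a b : A}
    (pref_trans : ∀ ⦃b c d⦄, pref a b c → pref a c d → pref a b d)
    (pref_asymm : ∀ b c, pref a b c → ¬ pref a c b)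
    (pref_total : ∀ b c, accept a b → accept a c → b ≠ c → pref a b c ∨ pref a c b)
    (hab : accept a b) : ∃ w, IsFirstChoice accept pref a w := by
  have : IsTrans A (pref a) := ⟨fun _ _ _ h₁ h₂ => pref_trans h₁ h₂⟩
  have : Std.Irrefl (pref a) := ⟨fun c h => pref_asymm c c h h⟩
  obtain ⟨w, hw, hmax⟩ :=
    (Finite.wellFounded_of_trans_of_irrefl (pref a)).has_min {c | accept a c} ⟨b, hab⟩
  exact ⟨w, hw, fun c hc hcw => (pref_total w c hw hc hcw.symm).resolve_right (hmax c hc)⟩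

lemma IsFirstChoice.unique (pref_asymm : ∀ a b c, pref a b c → ¬ pref a c b) {a b c : A}
    (hb : IsFirstChoice accept pref a b) (hc : IsFirstChoice accept pref a c) : b = c := by
  by_contra hbc
  exact pref_asymm a b c (hb.2 c hc.1 (Ne.symm hbc)) (hc.2 b hb.1 hbc)

lemma exists_isStable_of_isFirstChoice_injective [Finite A] {side : A → Bool}
    (accept_symm : ∀ a b, accept a b → accept b a)
    (accept_bip : ∀ a b, accept a b → side a ≠ side b)
    (pref_trans : ∀ a ⦃b c d⦄, pref a b c → pref a c d → pref a b d)
    (pref_asymm : ∀ a b c, pref a b c → ¬ pref a c b)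
    (pref_total : ∀ a b c, accept a b → accept a c → b ≠ c → pref a b c ∨ pref a c b)
    (first_inj :
      ∀ m m' w, IsFirstChoice accept pref m w → IsFirstChoice accept pref m' w → m = m') :
    ∃ M, IsStable accept pref M := by
  let P a b :=
    side a = true ∧ IsFirstChoice accept pref a b ∨ side b = true ∧ IsFirstChoice accept pref b a
  have P_unique : ∀ a b c, P a b → P a c → b = c := by
    rintro a b c (⟨ha, hb⟩ | ⟨hb', hb⟩) (⟨ha', hc⟩ | ⟨hc', hc⟩)
    · exact hb.unique pref_asymm hc
    · exact absurd (hc'.trans ha.symm) (accept_bip c a hc.1)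
    · exact absurd (hb'.trans ha'.symm) (accept_bip b a hb.1)
    · exact first_inj b c a hb hc
  obtain ⟨M, hinv, hM, hpartner⟩ :=
    Function.exists_involutive_of_symm_of_unique (P := P) (fun _ _ => Or.symm) P_unique
  have no_block_from_true_side : ∀ m b, side m = true → ¬ blocks accept pref M m b := by
    rintro m b hm ⟨hmb, hblock, -⟩
    obtain ⟨w, hw⟩ := exists_isFirstChoice (pref_trans m) (pref_asymm m) (pref_total m) hmb
    rw [hM m w (Or.inl ⟨hm, hw⟩)] at hblock
    rcases hblock with h | h
    · exact accept_bip m m (h ▸ hw.1) rfl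
    · have hbw : b ≠ w := by
        rintro rfl
        exact pref_asymm m b b h h
      exact pref_asymm m w b (hw.2 b hmb hbw) h
  refine ⟨M, hinv, fun a ha => ?_, fun a b hab => ?_⟩
  · rcases hpartner a ha with ⟨-, h⟩ | ⟨-, h⟩
    exacts [h.1, accept_symm _ _ h.1]
  · cases ha : side a
    · have hb : side b = true := by
        simpa [ha] using (accept_bip a b hab.1).symm
      exact no_block_from_true_side b a hb (blocks_comm accept_symm hab)
    · exact no_block_from_true_side a b ha hab

lemma isStable_of_isStable_erase (accept_symm : ∀ a b, accept a b → accept b a)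
    (pref_trans : ∀ a ⦃b c d⦄, pref a b c → pref a c d → pref a b d)
    (pref_asymm : ∀ a b c, pref a b c → ¬ pref a c b)
    (pref_total : ∀ a b c, accept a b → accept a c → b ≠ c → pref a b c ∨ pref a c b)
    {m₁ m₂ w : A} (hm : m₁ ≠ m₂) (h₁ : IsFirstChoice accept pref m₁ w) (hpref : pref w m₁ m₂)
    {M : A → A} (hM : IsStable (fun a b => accept a b ∧ s(a, b) ≠ s(m₂, w)) pref M) :
    IsStable accept pref M := by
  obtain ⟨hinv, hacc, hstable⟩ := hM
  have partner_ge : M w ≠ w ∧ (M w = m₁ ∨ pref w (M w) m₁) := by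
    by_contra hcon
    refine hstable m₁ w ⟨⟨h₁.1, ?_⟩, ?_, ?_⟩
    · rw [Ne, Sym2.eq_iff]
      rintro (⟨h, -⟩ | ⟨h, h'⟩)
      exacts [hm h, hm (h.trans h')]
    · by_cases hm₁ : M m₁ = m₁
      · exact Or.inl hm₁
      refine Or.inr (h₁.2 _ (hacc _ hm₁).1 fun hMm₁ => hcon ⟨fun hMw => hm₁ ?_, Or.inl ?_⟩)
      · rw [hMm₁, ← hMw, ← hMm₁, hinv]
      · rw [← hMm₁, hinv]
    · by_cases hw : M w = w
      · exact Or.inl hw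
      push Not at hcon
      exact Or.inr ((pref_total w m₁ (M w) (accept_symm _ _ h₁.1) (hacc w hw).1
        fun h => (hcon hw).1 h.symm).resolve_right (hcon hw).2)
  refine ⟨hinv, fun a ha => (hacc a ha).1, fun a b hab => ?_⟩
  by_cases herase : s(a, b) = s(m₂, w)
  · have w_stays : ¬ (M w = w ∨ pref w m₂ (M w)) := by
      rintro (h | h)
      · exact partner_ge.1 h
      rcases partner_ge.2 with h' | h'
      · rw [h'] at h
        exact pref_asymm _ _ _ hpref h
      · exact pref_asymm _ _ _ hpref (pref_trans w h h')
    rcases Sym2.eq_iff.1 herase with ⟨rfl, rfl⟩ | ⟨rfl, rfl⟩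
    exacts [w_stays hab.2.2, w_stays hab.2.1]
  · exact hstable a b ⟨⟨hab.1, herase⟩, hab.2⟩

end

theorem exists_isStable [Finite A] (side : A → Bool) {pref : A → A → A → Prop}
    (pref_trans : ∀ a ⦃b c d⦄, pref a b c → pref a c d → pref a b d)
    (pref_asymm : ∀ a b c, pref a b c → ¬ pref a c b) (accept : A → A → Prop)
    (accept_symm : ∀ a b, accept a b → accept b a)
    (accept_bip : ∀ a b, accept a b → side a ≠ side b)
    (pref_total : ∀ a b c, accept a b → accept a c → b ≠ c → pref a b c ∨ pref a c b) :
    ∃ M, IsStable accept pref M := by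
  induction accept using WellFoundedLT.induction with | _ accept ih => ?_
  by_cases first_inj :
      ∀ m m' w, IsFirstChoice accept pref m w → IsFirstChoice accept pref m' w → m = m'
  · exact exists_isStable_of_isFirstChoice_injective accept_symm accept_bip pref_trans pref_asymm
      pref_total first_inj
  push Not at first_inj
  obtain ⟨m₁, m₂, w, h₁, h₂, hne⟩ := first_inj
  wlog hpref : pref w m₁ m₂ generalizing m₁ m₂
  · exact this m₂ m₁ h₂ h₁ hne.symm ((pref_total w m₁ m₂ (accept_symm _ _ h₁.1)
      (accept_symm _ _ h₂.1) hne).resolve_left hpref)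
  let accept' a b := accept a b ∧ s(a, b) ≠ s(m₂, w)
  have hlt : accept' < accept :=
    lt_of_le_not_ge (fun a b h => h.1) fun h => (h m₂ w h₂.1).2 rfl
  obtain ⟨M, hM⟩ := ih accept' hlt
    (fun a b h => ⟨accept_symm a b h.1, by rw [Sym2.eq_swap]; exact h.2⟩)
    (fun a b h => accept_bip a b h.1) (fun a b c hb hc => pref_total a b c hb.1 hc.1)
  exact ⟨M, isStable_of_isStable_erase accept_symm pref_trans pref_asymm pref_total hne h₁ hpref
    hM⟩

end SM

theorem stmt2_general {A : Type*} [Fintype A] (side : A → Bool)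
    (accept : A → A → Prop) (pref : A → A → A → Prop)
    (accept_symm : ∀ a b, accept a b → accept b a)
    (accept_bip : ∀ a b, accept a b → side a ≠ side b)
    (pref_trans : ∀ a, Transitive (pref a))
    (pref_asymm : ∀ a b c, pref a b c → ¬ pref a c b)
    (pref_total : ∀ a b c, accept a b → accept a c → b ≠ c → pref a b c ∨ pref a c b) :
    ∃ M : A → A, Function.Involutive M ∧ (∀ a, M a ≠ a → accept a (M a)) ∧
      ∀ a b, ¬ SM.blocks accept pref M a b :=
  SM.exists_isStable side pref_trans pref_asymm accept accept_symm accept_bip pref_total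

/-- Every bipartite Stable Marriage instance with strict, possibly incomplete preference
lists admits a stable matching, i.e., a matching with no blocking pair. Bipartiteness is
expressed by a `side` function such that acceptability only holds across sides. -/
theorem stmt2 {A : Type*} [Fintype A] (side : A → Bool)
    (accept : A → A → Prop) (pref : A → A → A → Prop)
    (accept_symm : ∀ a b, accept a b → accept b a)
    (accept_bip : ∀ a b, accept a b → side a ≠ side b)
    (pref_acc : ∀ a b c, pref a b c → accept a b ∧ accept a c)
    (pref_trans : ∀ a, Transitive (pref a))
    (pref_asymm : ∀ a b c, pref a b c → ¬ pref a c b)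
    (pref_total : ∀ a b c, accept a b → accept a c → b ≠ c → pref a b c ∨ pref a c b) :
    ∃ M : A → A, Function.Involutive M ∧ (∀ a, M a ≠ a → accept a (M a)) ∧
      ∀ a b, ¬ SM.blocks accept pref M a b :=
  stmt2_general side accept pref accept_symm accept_bip pref_trans pref_asymm pref_total
end

section
/- Consider the clause gadget: eight agents c^1,c^2,c^3,p^1,p^2,p^3,q,z with acceptable pairs {c^s,p^s} for s=1,2,3, {c^s,q} for s=1,2,3, and {p^s,z} for s=1,2,3. This graph admits exactly three perfect matchings M^1, M^2, M^3, where M^s = {{c^s,q},{p^s,z}} ∪ {{c^t,p^t} : t ≠ s} for s ∈ {1,2,3}. -/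
/-!
In a perfect matching, `q` is matched to some `c^s`. Every other `c^t` then has to take `p^t`,
and `p^s`, whose other neighbour `c^s` is already taken, has to take `z`. So a perfect matching
is determined by the partner of `q`, and the three choices give `M¹`, `M²`, `M³`.
-/

/-- The clause gadget: agents `c^1,c^2,c^3` are `0,1,2 : Fin 8`, agents
`p^1,p^2,p^3` are `3,4,5 : Fin 8`, `q` is `6` and `z` is `7`.  Acceptable pairs are
{c^s,p^s}, {c^s,q} and {p^s,z} for s = 1,2,3. -/
def cgAdj (a b : Fin 8) : Prop :=
  (a, b) ∈ ([(0,3),(1,4),(2,5),(0,6),(1,6),(2,6),(3,7),(4,7),(5,7)] : List (Fin 8 × Fin 8)) ∨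
  (b, a) ∈ ([(0,3),(1,4),(2,5),(0,6),(1,6),(2,6),(3,7),(4,7),(5,7)] : List (Fin 8 × Fin 8))

/-- M¹ = {{c¹,q},{p¹,z},{c²,p²},{c³,p³}} as a fixed-point-free involution. -/
def cgM1 : Fin 8 → Fin 8 := ![6,4,5,7,1,2,0,3]

/-- M² = {{c²,q},{p²,z},{c¹,p¹},{c³,p³}}. -/
def cgM2 : Fin 8 → Fin 8 := ![3,6,5,0,7,2,1,4]

/-- M³ = {{c³,q},{p³,z},{c¹,p¹},{c²,p²}}. -/
def cgM3 : Fin 8 → Fin 8 := ![3,4,6,0,1,7,2,5]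

instance : DecidableRel cgAdj := fun a b => by unfold cgAdj; infer_instance

/-- Since `cgAdj` is loopless, such an involution has no fixed point: it is a perfect matching. -/
def IsClauseGadgetMatching (f : Fin 8 → Fin 8) : Prop :=
  Function.Involutive f ∧ ∀ v, cgAdj v (f v)

theorem cgAdj_six_iff {b : Fin 8} : cgAdj 6 b ↔ b < 3 := by
  revert b; decide

theorem cgAdj_iff_of_lt_three {c b : Fin 8} (hc : c < 3) : cgAdj c b ↔ b = c + 3 ∨ b = 6 := by
  revert c b; decide

theorem cgAdj_add_three_iff {c b : Fin 8} (hc : c < 3) : cgAdj (c + 3) b ↔ b = c ∨ b = 7 := by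
  revert c b; decide

theorem fin_eight_cases (v : Fin 8) : v < 3 ∨ (∃ c < 3, v = c + 3) ∨ v = 6 ∨ v = 7 := by
  revert v; decide

namespace IsClauseGadgetMatching

variable {f g : Fin 8 → Fin 8}

theorem apply_six_lt_three (hf : IsClauseGadgetMatching f) : f 6 < 3 :=
  cgAdj_six_iff.1 (hf.2 6)

theorem apply_of_ne_apply_six (hf : IsClauseGadgetMatching f) {c : Fin 8} (hc : c < 3)
    (hne : c ≠ f 6) : f c = c + 3 := by
  refine ((cgAdj_iff_of_lt_three hc).1 (hf.2 c)).resolve_right fun h => hne ?_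
  rw [← h, hf.1 c]

theorem apply_apply_six_add_three (hf : IsClauseGadgetMatching f) : f (f 6 + 3) = 7 := by
  have hs := hf.apply_six_lt_three
  refine ((cgAdj_add_three_iff hs).1 (hf.2 _)).resolve_left fun h => ?_
  have h' := hf.1 (f 6 + 3)
  rw [h, hf.1] at h'
  omega

theorem apply_seven (hf : IsClauseGadgetMatching f) : f 7 = f 6 + 3 := by
  rw [← hf.apply_apply_six_add_three, hf.1]

theorem eq_of_apply_six_eq (hf : IsClauseGadgetMatching f) (hg : IsClauseGadgetMatching g)
    (h : f 6 = g 6) : f = g := by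
  funext v
  rcases fin_eight_cases v with hv | ⟨c, hc, rfl⟩ | rfl | rfl
  · by_cases hvs : v = f 6
    · rw [hvs, hf.1, h, hg.1]
    · rw [hf.apply_of_ne_apply_six hv hvs, hg.apply_of_ne_apply_six hv (h ▸ hvs)]
  · by_cases hcs : c = f 6
    · rw [hcs, hf.apply_apply_six_add_three, h, hg.apply_apply_six_add_three]
    · rw [← hf.1.eq_iff.1 (hf.apply_of_ne_apply_six hc hcs),
        ← hg.1.eq_iff.1 (hg.apply_of_ne_apply_six hc (h ▸ hcs))]
  · exact h
  · rw [hf.apply_seven, hg.apply_seven, h]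

end IsClauseGadgetMatching

theorem isClauseGadgetMatching_cgM1 : IsClauseGadgetMatching cgM1 := by
  unfold IsClauseGadgetMatching Function.Involutive; decide

theorem isClauseGadgetMatching_cgM2 : IsClauseGadgetMatching cgM2 := by
  unfold IsClauseGadgetMatching Function.Involutive; decide

theorem isClauseGadgetMatching_cgM3 : IsClauseGadgetMatching cgM3 := by
  unfold IsClauseGadgetMatching Function.Involutive; decide

/-- The clause gadget admits exactly three perfect matchings, namely M¹, M², M³
(perfect matchings are represented as involutions `f` with every vertex adjacent to
its image; such an `f` has no fixed point since `cgAdj` is loopless). -/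
theorem stmt6 :
    cgM1 ≠ cgM2 ∧ cgM1 ≠ cgM3 ∧ cgM2 ≠ cgM3 ∧
    ∀ f : Fin 8 → Fin 8,
      (Function.Involutive f ∧ ∀ v, cgAdj v (f v)) ↔ (f = cgM1 ∨ f = cgM2 ∨ f = cgM3) := by
  refine ⟨by decide, by decide, by decide, fun f =>
    ⟨fun (hf : IsClauseGadgetMatching f) => ?_, ?_⟩⟩
  · have hs := hf.apply_six_lt_three
    obtain h | h | h : f 6 = 0 ∨ f 6 = 1 ∨ f 6 = 2 := by omega
    · exact .inl (hf.eq_of_apply_six_eq isClauseGadgetMatching_cgM1 h)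
    · exact .inr (.inl (hf.eq_of_apply_six_eq isClauseGadgetMatching_cgM2 h))
    · exact .inr (.inr (hf.eq_of_apply_six_eq isClauseGadgetMatching_cgM3 h))
  · rintro (rfl | rfl | rfl)
    exacts [isClauseGadgetMatching_cgM1, isClauseGadgetMatching_cgM2, isClauseGadgetMatching_cgM3]
end

section
/- Let I be a Stable Roommates instance and construct J by adding, for each agent a_i of I, two new agents b_i^1 and b_i^2, where a_i's preference list is its list in I followed by b_i^1 then b_i^2, b_i^1's list is b_i^2 then a_i, and b_i^2's list is a_i then b_i^1. Let D_J = D ∪ {b_i^1, b_i^2 : all i} for a given D ⊆ A. Then I admits a perfect matching M in which no agent of D is in a blocking pair (with respect to I) if and only if J admits a matching M' in which no agent of D_J is in a blocking pair (with respect to J). -/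
/-!
The gadget `a, b_a^1, b_a^2` is a rotating triangle: `b_a^1` and `b_a^2` can only be left
unblocked if they are matched to each other, so a matching of `J` in which no gadget agent
blocks restricts to a perfect matching of `I`. Conversely, a perfect matching of `I`
extended by the pairs `{b_a^1, b_a^2}` leaves every gadget agent with no better acceptable
partner. On original agents the two notions of blocking pair then coincide.
-/

namespace Stmt10

variable {A : Type*}

/-- The agent set of the constructed instance `J`: each original agent `a` (as `Sum.inl a`)
plus two new agents `b_a^1 = Sum.inr (a, false)` and `b_a^2 = Sum.inr (a, true)`. -/
abbrev AJ (A : Type*) := A ⊕ (A × Bool)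

/-- Acceptability in `J`: original agents keep their acceptability; `a` finds its two
new agents acceptable and vice versa; `b_a^1` and `b_a^2` find each other acceptable. -/
def acceptJ (accept : A → A → Prop) : AJ A → AJ A → Prop
  | Sum.inl a, Sum.inl b => accept a b
  | Sum.inl a, Sum.inr (b, _) => a = b
  | Sum.inr (a, _), Sum.inl b => a = b
  | Sum.inr (a, s), Sum.inr (b, t) => a = b ∧ s ≠ t

/-- Preferences in `J`: `a`'s list is its list in `I` followed by `b_a^1` then `b_a^2`;
`b_a^1`'s list is `b_a^2` then `a`; `b_a^2`'s list is `a` then `b_a^1`. -/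
def prefJ (accept : A → A → Prop) (pref : A → A → A → Prop) :
    AJ A → AJ A → AJ A → Prop
  | Sum.inl a, Sum.inl b, Sum.inl c => pref a b c
  | Sum.inl a, Sum.inl b, Sum.inr (c, _) => accept a b ∧ a = c
  | Sum.inl a, Sum.inr (b, s), Sum.inr (c, t) => a = b ∧ a = c ∧ s = false ∧ t = true
  | Sum.inr (a, false), Sum.inr (b, t), Sum.inl c => a = b ∧ t = true ∧ a = c
  | Sum.inr (a, true), Sum.inl b, Sum.inr (c, t) => a = b ∧ a = c ∧ t = false
  | _, _, _ => False

/-- Blocking pair in `I` (matchings are involutions; `M a = a` means `a` is unmatched). -/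
def blocksI (accept : A → A → Prop) (pref : A → A → A → Prop)
    (M : A → A) (a b : A) : Prop :=
  accept a b ∧ (M a = a ∨ pref a b (M a)) ∧ (M b = b ∨ pref b a (M b))

/-- Blocking pair in `J`. -/
def blocksJ (accept : A → A → Prop) (pref : A → A → A → Prop)
    (M : AJ A → AJ A) (x y : AJ A) : Prop :=
  acceptJ accept x y ∧ (M x = x ∨ prefJ accept pref x y (M x)) ∧
    (M y = y ∨ prefJ accept pref y x (M y))

def extendMatching (M : A → A) : AJ A → AJ A
  | Sum.inl a => Sum.inl (M a)
  | Sum.inr (a, s) => Sum.inr (a, !s)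

section

variable {accept : A → A → Prop} {pref : A → A → A → Prop}

theorem acceptJ_inr_iff {a : A} {s : Bool} {y : AJ A} :
    acceptJ accept (Sum.inr (a, s)) y ↔ y = Sum.inl a ∨ y = Sum.inr (a, !s) := by
  rcases y with b | ⟨b, t⟩
  · simp [acceptJ, eq_comm]
  · cases s <;> cases t <;> simp [acceptJ, eq_comm]

theorem extendMatching_involutive_iff {M : A → A} :
    Function.Involutive (extendMatching M) ↔ Function.Involutive M := by
  refine ⟨fun h a => Sum.inl_injective (h (Sum.inl a)), fun h => ?_⟩
  rintro (a | ⟨a, s⟩)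
  · simp [extendMatching, h a]
  · simp [extendMatching]

theorem acceptJ_extendMatching {M : A → A} (hacc : ∀ a, accept a (M a)) (x : AJ A) :
    acceptJ accept x (extendMatching M x) := by
  rcases x with a | ⟨a, s⟩
  · exact hacc a
  · simp [acceptJ_inr_iff, extendMatching]

theorem blocksJ_extendMatching_inl_inl_iff {M : A → A} {a b : A} :
    blocksJ accept pref (extendMatching M) (Sum.inl a) (Sum.inl b) ↔
      blocksI accept pref M a b := by
  simp [blocksJ, blocksI, extendMatching, acceptJ, prefJ]

theorem not_blocksJ_extendMatching_inl_inr {M : A → A} {a : A} (ha : M a ≠ a) (p : A × Bool) :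
    ¬ blocksJ accept pref (extendMatching M) (Sum.inl a) (Sum.inr p) := by
  rintro ⟨-, ha' | hpref, -⟩
  · exact ha (Sum.inl_injective ha')
  · exact hpref

theorem not_blocksJ_extendMatching_inr {M : A → A} (hM : ∀ a, M a ≠ a) (a : A) (s : Bool)
    (y : AJ A) : ¬ blocksJ accept pref (extendMatching M) (Sum.inr (a, s)) y := by
  rintro ⟨-, hx | hx, hy⟩
  · cases s <;> simp [extendMatching] at hx
  · cases s
    · rcases y with _ | _ <;> exact hx
    · rcases y with b | _
      · obtain ⟨rfl, -, -⟩ := hx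
        rcases hy with hy | hy
        · exact hM a (Sum.inl_injective hy)
        · exact hy
      · exact hx

variable {M' : AJ A → AJ A}

theorem partner_inr_of_ne (hacc : ∀ x, M' x ≠ x → acceptJ accept x (M' x)) {a : A} {s : Bool}
    (h : M' (Sum.inr (a, s)) ≠ Sum.inr (a, s)) :
    M' (Sum.inr (a, s)) = Sum.inl a ∨ M' (Sum.inr (a, s)) = Sum.inr (a, !s) :=
  acceptJ_inr_iff.1 (hacc _ h)

theorem gadget_pair_matched (hinv : Function.Involutive M')
    (hacc : ∀ x, M' x ≠ x → acceptJ accept x (M' x))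
    (hb : ∀ a s y, ¬ blocksJ accept pref M' (Sum.inr (a, s)) y) (a : A) :
    M' (Sum.inr (a, false)) = Sum.inr (a, true) := by
  set b₁ : AJ A := Sum.inr (a, false)
  set b₂ : AJ A := Sum.inr (a, true)
  have hswap : M' b₁ = b₂ → M' b₂ = b₁ := fun h => h ▸ hinv b₁
  by_cases hb₂ : M' b₂ = b₂
  · -- `b₁` is unmatched or matched to `a`, and prefers the unmatched `b₂` to both.
    by_contra hb₁b₂
    refine hb a false b₂ ⟨by simp [b₂, acceptJ], ?_, Or.inl hb₂⟩
    by_cases hb₁ : M' b₁ = b₁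
    · exact Or.inl hb₁
    · have := (partner_inr_of_ne hacc hb₁).resolve_right hb₁b₂
      exact Or.inr (by rw [this]; exact ⟨rfl, rfl, rfl⟩)
  rcases partner_inr_of_ne hacc hb₂ with hb₂a | hb₂b₁
  · -- `a` is matched to its last choice `b₂`, so `b₁` would be unmatched and block with `a`.
    have ha : M' (Sum.inl a) = b₂ := by rw [← hb₂a, hinv]
    have hb₁ : M' b₁ = b₁ := by
      by_contra hb₁
      rcases partner_inr_of_ne hacc hb₁ with h | h
      · exact absurd (by rw [← ha, ← h, hinv]) (by simp [b₁, b₂] : b₁ ≠ b₂)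
      · exact absurd (hswap h) (by rw [hb₂a]; simp [b₁])
    exact absurd ⟨rfl, Or.inl hb₁, Or.inr (by rw [ha]; exact ⟨rfl, rfl, rfl, rfl⟩)⟩
      (hb a false (Sum.inl a))
  · simpa using (congrArg M' hb₂b₁).symm.trans (hinv b₂)

theorem eq_extendMatching_of_gadgets_unblocked (hinv : Function.Involutive M')
    (hacc : ∀ x, M' x ≠ x → acceptJ accept x (M' x))
    (hb : ∀ a s y, ¬ blocksJ accept pref M' (Sum.inr (a, s)) y) :
    ∃ M : A → A, (∀ a, M a ≠ a) ∧ M' = extendMatching M := by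
  have hgadget : ∀ a s, M' (Sum.inr (a, s)) = Sum.inr (a, !s) := by
    rintro a (_ | _)
    · exact gadget_pair_matched hinv hacc hb a
    · rw [← gadget_pair_matched hinv hacc hb a, hinv]; rfl
  have hinl : ∀ a, ∃ b, M' (Sum.inl a) = Sum.inl b ∧ b ≠ a := by
    intro a
    rcases hz : M' (Sum.inl a) with b | ⟨c, t⟩
    · refine ⟨b, rfl, ?_⟩
      rintro rfl
      -- `b_a^2` prefers `a` to its partner `b_a^1`, and `a` is unmatched.
      exact hb b true (Sum.inl b)
        ⟨rfl, Or.inr (by rw [hgadget]; exact ⟨rfl, rfl, rfl⟩), Or.inl hz⟩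
    · have := hinv (Sum.inl a)
      rw [hz, hgadget] at this
      simp at this
  choose M hM hne using hinl
  refine ⟨M, hne, funext ?_⟩
  rintro (a | ⟨a, s⟩)
  · exact hM a
  · exact hgadget a s

end

theorem stmt10_general (accept : A → A → Prop) (pref : A → A → A → Prop)
    (D : Set A) :
    (∃ M : A → A, Function.Involutive M ∧ (∀ a, M a ≠ a) ∧ (∀ a, accept a (M a)) ∧
        ∀ d ∈ D, ∀ b, ¬ blocksI accept pref M d b) ↔
    (∃ M' : AJ A → AJ A, Function.Involutive M' ∧
        (∀ x, M' x ≠ x → acceptJ accept x (M' x)) ∧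
        ∀ d : AJ A, ((∃ a ∈ D, d = Sum.inl a) ∨ (∃ a s, d = Sum.inr (a, s))) →
          ∀ y, ¬ blocksJ accept pref M' d y) := by
  constructor
  · rintro ⟨M, hinv, hne, hacc, hD⟩
    refine ⟨extendMatching M, extendMatching_involutive_iff.2 hinv,
      fun x _ => acceptJ_extendMatching hacc x, ?_⟩
    rintro d (⟨a, ha, rfl⟩ | ⟨a, s, rfl⟩) y
    · rcases y with b | p
      · exact blocksJ_extendMatching_inl_inl_iff.not.2 (hD a ha b)
      · exact not_blocksJ_extendMatching_inl_inr (hne a) p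
    · exact not_blocksJ_extendMatching_inr hne a s y
  · rintro ⟨M', hinv, hacc, hD⟩
    obtain ⟨M, hne, rfl⟩ := eq_extendMatching_of_gadgets_unblocked hinv hacc
      fun a s => hD _ (Or.inr ⟨a, s, rfl⟩)
    refine ⟨M, extendMatching_involutive_iff.1 hinv, hne,
      fun a => hacc (Sum.inl a) (by simpa [extendMatching] using hne a), ?_⟩
    exact fun d hd b h => hD (Sum.inl d) (Or.inl ⟨d, hd, rfl⟩) (Sum.inl b)
      (blocksJ_extendMatching_inl_inl_iff.2 h)

/-- `I` admits a perfect matching in which no agent of `D` is in a blocking pair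
(with respect to `I`) if and only if `J` admits a matching in which no agent of
`D_J = D ∪ {b_a^1, b_a^2 : a ∈ A}` is in a blocking pair (with respect to `J`). -/
theorem stmt10 (accept : A → A → Prop) (pref : A → A → A → Prop)
    (accept_symm : ∀ a b, accept a b → accept b a)
    (accept_irrefl : ∀ a, ¬ accept a a)
    (pref_irrefl : ∀ a b, ¬ pref a b b)
    (D : Set A) :
    (∃ M : A → A, Function.Involutive M ∧ (∀ a, M a ≠ a) ∧ (∀ a, accept a (M a)) ∧
        ∀ d ∈ D, ∀ b, ¬ blocksI accept pref M d b) ↔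
    (∃ M' : AJ A → AJ A, Function.Involutive M' ∧
        (∀ x, M' x ≠ x → acceptJ accept x (M' x)) ∧
        ∀ d : AJ A, ((∃ a ∈ D, d = Sum.inl a) ∨ (∃ a s, d = Sum.inr (a, s))) →
          ∀ y, ¬ blocksJ accept pref M' d y) :=
  stmt10_general accept pref D

end Stmt10
end

section
/- Let I be a Stable Roommates instance whose acceptability graph is an odd cycle a_1, a_2, ..., a_k (k odd) in which every agent prefers its successor to its predecessor (indices modulo k). Then I admits no stable matching, and every maximum-cardinality matching of I — which leaves exactly one agent a_j unmatched and matches a_{j+1} with a_{j+2}, a_{j+3} with a_{j+4}, etc. — admits exactly one blocking pair, namely {a_{j-1}, a_j}. -/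
/-!
Matchings are involutions of `Fin k`, so the number of matched agents is even; as `k` is odd,
some agent `j` is unmatched. Then `j - 1` is unmatched or matched to `j - 2` (never to `j`), and
either way it prefers `j`, so `{j - 1, j}` blocks. Conversely, in a pair `{a, a + 1}` the agent
`a + 1` never prefers `a` to a partner, so a blocking pair needs `a + 1` unmatched. A maximum
matching leaves exactly one agent `j` unmatched, and walking around the cycle from `j` forces it
to match `j + 1` with `j + 2`, `j + 3` with `j + 4`, and so on.
-/

namespace Stmt17

/-- Acceptability in the odd-cycle instance: agent `i` finds exactly its successor
`i + 1` and predecessor `i - 1` acceptable (indices mod `k`). -/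
def accept (k : ℕ) [NeZero k] (i j : Fin k) : Prop := j = i + 1 ∨ i = j + 1

/-- Every agent prefers its successor to its predecessor: `i` prefers `b` to `c`
exactly when `b = i + 1` and `c = i - 1`. -/
def pref (k : ℕ) [NeZero k] (i b c : Fin k) : Prop := b = i + 1 ∧ c = i - 1

/-- Matchings are involutions whose matched pairs are acceptable (`M x = x` means
`x` is unmatched). -/
def IsMatching (k : ℕ) [NeZero k] (M : Fin k → Fin k) : Prop :=
  Function.Involutive M ∧ ∀ x, M x ≠ x → accept k x (M x)

/-- Maximum-cardinality matchings maximise the number of matched agents. -/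
def IsMaxMatching (k : ℕ) [NeZero k] (M : Fin k → Fin k) : Prop :=
  IsMatching k M ∧ ∀ M', IsMatching k M' → {x | M' x ≠ x}.ncard ≤ {x | M x ≠ x}.ncard

/-- `{a, b}` is a blocking pair of `M`. -/
def blocks (k : ℕ) [NeZero k] (M : Fin k → Fin k) (a b : Fin k) : Prop :=
  accept k a b ∧ (M a = a ∨ pref k a b (M a)) ∧ (M b = b ∨ pref k b a (M b))

/-- The matching leaving exactly agent `j` unmatched and matching `j+1` with `j+2`,
`j+3` with `j+4`, etc. -/
def Mj (k : ℕ) [NeZero k] (j : Fin k) : Fin k → Fin k := fun x =>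
  if x = j then j else if (x - j).val % 2 = 1 then x + 1 else x - 1

theorem _root_.Function.Involutive.even_ncard_ne {α : Type*} [Finite α] {f : α → α}
    (hf : Function.Involutive f) : Even {x | f x ≠ x}.ncard := by
  classical
  have := Fintype.ofFinite α
  have hsq : hf.toPerm f ^ 2 = 1 := Equiv.ext hf
  have hsupp : {x | f x ≠ x} = ↑(hf.toPerm f).support := by ext; simp
  rw [hsupp, Set.ncard_coe_finset, even_iff_two_dvd]
  exact Equiv.Perm.two_dvd_card_support hsq

variable {k : ℕ} [NeZero k]

open Fin.CommRing

theorem one_ne_zero_of_two_le (hk : 2 ≤ k) : (1 : Fin k) ≠ 0 :=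
  have := Fin.nontrivial_iff_two_le.mpr hk
  one_ne_zero

theorem two_ne_zero_of_three_le (hk : 3 ≤ k) : (2 : Fin k) ≠ 0 := by
  rw [Ne, Fin.ext_iff, Fin.coe_ofNat_eq_mod, Nat.mod_eq_of_lt (by omega)]
  simp

theorem val_sub_add_one {x j : Fin k} (h : (x - j).val + 1 < k) :
    (x + 1 - j).val = (x - j).val + 1 := by
  rw [add_sub_right_comm]
  exact Fin.val_add_one_of_lt' h

theorem val_sub_one_sub {x j : Fin k} (hx : x ≠ j) : (x - 1 - j).val = (x - j).val - 1 := by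
  rw [sub_right_comm]
  exact Fin.val_sub_one_of_ne_zero (sub_ne_zero.mpr hx)

section Mj

variable {j x : Fin k}

@[simp]
theorem Mj_self : Mj k j j = j := if_pos rfl

theorem Mj_of_odd (h : (x - j).val % 2 = 1) : Mj k j x = x + 1 := by
  have hx : x ≠ j := by rintro rfl; simp at h
  simp [Mj, hx, h]

theorem Mj_of_even (hx : x ≠ j) (h : (x - j).val % 2 = 0) : Mj k j x = x - 1 := by
  simp [Mj, hx, h]

theorem Mj_eq_self_iff (hk : 2 ≤ k) : Mj k j x = x ↔ x = j := by
  refine ⟨fun h => by_contra fun hx => ?_, fun h => h ▸ Mj_self⟩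
  have h1 := one_ne_zero_of_two_le hk
  rcases Nat.mod_two_eq_zero_or_one (x - j).val with h2 | h2
  · rw [Mj_of_even hx h2] at h
    exact h1 (by linear_combination -h)
  · rw [Mj_of_odd h2] at h
    exact h1 (by linear_combination h)

theorem Mj_eq_add_one_iff (hk : 3 ≤ k) : Mj k j x = x + 1 ↔ (x - j).val % 2 = 1 := by
  refine ⟨fun h => ?_, Mj_of_odd⟩
  by_contra hparity
  by_cases hx : x = j
  · subst hx
    rw [Mj_self] at h
    exact one_ne_zero_of_two_le (k := k) (by omega) (by linear_combination -h)
  · rw [Mj_of_even hx (by omega)] at h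
    exact two_ne_zero_of_three_le hk (by linear_combination -h)

theorem Mj_involutive (hodd : Odd k) : Function.Involutive (Mj k j) := by
  intro x
  by_cases hx : x = j
  · simp [hx]
  rcases Nat.mod_two_eq_zero_or_one (x - j).val with h | h
  · have hx0 : (x - j).val ≠ 0 := by simpa [sub_eq_zero] using hx
    rw [Mj_of_even hx h, Mj_of_odd (by rw [val_sub_one_sub hx]; omega), sub_add_cancel]
  · have hlt : (x - j).val + 1 < k := by
      have := (x - j).isLt
      obtain ⟨m, rfl⟩ := hodd
      omega
    have hx1 : x + 1 ≠ j := by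
      intro h1
      have := val_sub_add_one hlt
      rw [h1, sub_self, Fin.val_zero] at this
      omega
    rw [Mj_of_odd h, Mj_of_even hx1 (by rw [val_sub_add_one hlt]; omega), add_sub_cancel_right]

theorem isMatching_Mj (hodd : Odd k) : IsMatching k (Mj k j) := by
  refine ⟨Mj_involutive hodd, fun x _ => ?_⟩
  by_cases hx : x = j
  · simp_all
  rcases Nat.mod_two_eq_zero_or_one (x - j).val with h | h
  · rw [Mj_of_even hx h]
    exact Or.inr (sub_add_cancel x 1).symm
  · rw [Mj_of_odd h]
    exact Or.inl rfl

theorem ncard_Mj_ne (hk : 2 ≤ k) : {x | Mj k j x ≠ x}.ncard = k - 1 := by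
  have hset : {x | Mj k j x ≠ x} = {j}ᶜ := by
    ext x
    simp [Mj_eq_self_iff hk]
  rw [hset, Set.ncard_compl, Set.ncard_singleton, Nat.card_eq_fintype_card, Fintype.card_fin]

end Mj

namespace IsMatching

variable {M : Fin k → Fin k}

theorem ncard_ne_le (hodd : Odd k) (hM : IsMatching k M) : {x | M x ≠ x}.ncard ≤ k - 1 := by
  have hle : {x | M x ≠ x}.ncard ≤ k := by
    simpa using Set.ncard_le_card {x | M x ≠ x}
  have heven := hM.1.even_ncard_ne
  rcases hodd with ⟨m, rfl⟩
  rcases heven with ⟨n, hn⟩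
  omega

theorem exists_eq_self (hodd : Odd k) (hM : IsMatching k M) : ∃ j, M j = j := by
  have hlt : {x | M x ≠ x}.ncard < Nat.card (Fin k) := by
    have := hM.ncard_ne_le hodd
    have := NeZero.ne k
    rw [Nat.card_fin]
    omega
  obtain ⟨j, hj⟩ := (Set.ne_univ_iff_exists_notMem {x | M x ≠ x}).mp fun h =>
    hlt.ne (by rw [h, Set.ncard_univ])
  exact ⟨j, not_not.mp hj⟩

theorem apply_eq_add_one_or_sub_one (hM : IsMatching k M) {x : Fin k} (hx : M x ≠ x) :
    M x = x + 1 ∨ M x = x - 1 :=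
  (hM.2 x hx).imp id fun h => by linear_combination -h

theorem eq_Mj (hk : 3 ≤ k) (hM : IsMatching k M) {j : Fin k} (hfix : ∀ x, M x = x ↔ x = j) :
    M = Mj k j := by
  suffices ∀ d x, (x - j).val = d → M x = Mj k j x from funext fun x => this _ x rfl
  intro d
  induction d with
  | zero =>
    intro x hx
    obtain rfl : x = j := sub_eq_zero.mp (Fin.val_eq_zero_iff.mp hx)
    rw [Mj_self, (hfix x).mpr rfl]
  | succ d ih =>
    intro x hx
    have hxj : x ≠ j := by rintro rfl; simp at hx
    have hd : (x - 1 - j).val = d := by rw [val_sub_one_sub hxj, hx]; rfl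
    have hMx : M x = x - 1 ↔ d % 2 = 1 := by
      rw [hM.1.eq_iff, eq_comm, ih _ hd, ← hd, ← Mj_eq_add_one_iff hk, sub_add_cancel]
    rcases Nat.mod_two_eq_zero_or_one d with hd0 | hd1
    · rw [Mj_of_odd (by omega)]
      refine (hM.apply_eq_add_one_or_sub_one ((hfix x).not.mpr hxj)).resolve_right ?_
      rw [hMx]
      omega
    · rw [Mj_of_even hxj (by omega), hMx]
      exact hd1

end IsMatching

theorem isMaxMatching_Mj (hk : 2 ≤ k) (hodd : Odd k) (j : Fin k) : IsMaxMatching k (Mj k j) :=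
  ⟨isMatching_Mj hodd, fun _ hM' => ncard_Mj_ne hk ▸ hM'.ncard_ne_le hodd⟩

theorem IsMaxMatching.exists_eq_self_iff (hk : 2 ≤ k) (hodd : Odd k) {M : Fin k → Fin k}
    (hM : IsMaxMatching k M) : ∃ j, ∀ x, M x = x ↔ x = j := by
  have hcard : {x | M x ≠ x}.ncard = k - 1 :=
    le_antisymm (hM.1.ncard_ne_le hodd) (ncard_Mj_ne (j := 0) hk ▸ hM.2 _ (isMatching_Mj hodd))
  have hfix : {x | M x = x}.ncard = 1 := by
    have hcompl : {x | M x = x} = {x | M x ≠ x}ᶜ := by ext; simp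
    rw [hcompl, Set.ncard_compl, hcard, Nat.card_fin]
    omega
  obtain ⟨j, hj⟩ := Set.ncard_eq_one.mp hfix
  exact ⟨j, Set.ext_iff.mp hj⟩

theorem blocks_comm {M : Fin k → Fin k} {a b : Fin k} : blocks k M a b ↔ blocks k M b a := by
  unfold blocks accept
  tauto

theorem blocks.apply_eq_self (hk : 3 ≤ k) {M : Fin k → Fin k} {a b : Fin k}
    (h : blocks k M a b) (hab : b = a + 1) : M b = b := by
  refine h.2.2.resolve_right fun ⟨hba, _⟩ => two_ne_zero_of_three_le hk ?_
  linear_combination -hba - hab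

theorem blocks_sub_one (hk : 2 ≤ k) {M : Fin k → Fin k} (hM : IsMatching k M) {j : Fin k}
    (hj : M j = j) : blocks k M (j - 1) j := by
  refine ⟨Or.inl (sub_add_cancel j 1).symm, ?_, Or.inl hj⟩
  by_cases h : M (j - 1) = j - 1
  · exact Or.inl h
  refine Or.inr ⟨(sub_add_cancel j 1).symm, ?_⟩
  refine (hM.apply_eq_add_one_or_sub_one h).resolve_left fun h' => ?_
  rw [sub_add_cancel, hM.1.eq_iff, hj] at h'
  exact one_ne_zero_of_two_le hk (by linear_combination -h')

theorem blocks_iff_of_eq_self_iff (hk : 3 ≤ k) {M : Fin k → Fin k} (hM : IsMatching k M)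
    {j : Fin k} (hfix : ∀ x, M x = x ↔ x = j) {a b : Fin k} :
    blocks k M a b ↔ (a = j - 1 ∧ b = j) ∨ (a = j ∧ b = j - 1) := by
  have hj : M j = j := (hfix j).mpr rfl
  constructor
  · intro h
    rcases h.1 with hab | hba
    · have hb : b = j := (hfix b).mp (h.apply_eq_self hk hab)
      exact Or.inl ⟨by rw [← hb, hab, add_sub_cancel_right], hb⟩
    · have ha : a = j := (hfix a).mp ((blocks_comm.mp h).apply_eq_self hk hba)
      exact Or.inr ⟨ha, by rw [← ha, hba, add_sub_cancel_right]⟩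
  · rintro (⟨rfl, rfl⟩ | ⟨rfl, rfl⟩)
    · exact blocks_sub_one (by omega) hM hj
    · exact blocks_comm.mp (blocks_sub_one (by omega) hM hj)

/-- For an odd-cycle Stable Roommates instance in which every agent prefers its
successor to its predecessor: no stable matching exists; for each `j` the matching
`Mj` (leaving exactly `j` unmatched) is a maximum-cardinality matching admitting
exactly one blocking pair, namely `{j - 1, j}`; and every maximum-cardinality
matching is of this form. -/
theorem stmt17 (k : ℕ) [NeZero k] (hk : 3 ≤ k) (hodd : Odd k) :
    (¬ ∃ M, IsMatching k M ∧ ∀ a b, ¬ blocks k M a b) ∧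
    (∀ j : Fin k, IsMaxMatching k (Mj k j) ∧
      ∀ a b, blocks k (Mj k j) a b ↔ ((a = j - 1 ∧ b = j) ∨ (a = j ∧ b = j - 1))) ∧
    (∀ M, IsMaxMatching k M → ∃ j, M = Mj k j) := by
  have hk2 : 2 ≤ k := by omega
  refine ⟨?_, fun j => ⟨isMaxMatching_Mj hk2 hodd j, fun a b => ?_⟩, fun M hM => ?_⟩
  · rintro ⟨M, hM, hstable⟩
    obtain ⟨j, hj⟩ := hM.exists_eq_self hodd
    exact hstable _ _ (blocks_sub_one hk2 hM hj)
  · exact blocks_iff_of_eq_self_iff hk (isMatching_Mj hodd) fun _ => Mj_eq_self_iff hk2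
  · obtain ⟨j, hj⟩ := hM.exists_eq_self_iff hk2 hodd
    exact ⟨j, hM.1.eq_Mj hk hj⟩

end Stmt17
end

section
/- Let I be a Stable Roommates instance with incomplete preference lists on agents A, and let k ≥ 0. Construct I' by adding, for each agent a_i, k dummy agents appended to the end of a_i's list, each dummy ranking a_i first, and then completing all preference lists according to a fixed global strict order in which each agent a_i is immediately followed by its own dummies. Then I admits a matching with at most k blocking agents if and only if I' admits a matching with at most k blocking agents. -/
/-!
A matching `M` of `I` with at most `k` blocking agents yields one of `I'`: keep the pairs of
`M`, match every single agent with its first dummy, and pair the agents still left (the other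
dummies, and for `k = 0` the single agents of `M`) greedily along the global order. These
leftover agents rank one another by the global order alone, so the greedy pairing is stable
among them, and every blocking pair of the resulting matching is a blocking pair of `M`. For
`k = 0` this uses that `M` is stable, so that its single agents find each other unacceptable.
Conversely, restricting a matching of `I'` to its pairs of mutually acceptable original agents
loses no blocking pair, because original agents rank their own lists first.
-/

namespace Stmt18

variable {A : Type*}

/-- The agent set of the completed instance `I'`: each original agent `a` (as `Sum.inl a`)
together with its `k` dummy agents `Sum.inr (a, s)`, `s : Fin k`. -/
abbrev A' (A : Type*) (k : ℕ) := A ⊕ (A × Fin k)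

/-- The fixed global strict order used to complete the preference lists: agents are
ordered by the linear order on `A`, with each agent immediately followed by its own
dummies (ordered among themselves by their index). -/
def gOrd [LinearOrder A] (k : ℕ) : A' A k → A' A k → Prop
  | Sum.inl a, Sum.inl b => a < b
  | Sum.inl a, Sum.inr (b, _) => a ≤ b
  | Sum.inr (a, _), Sum.inl b => a < b
  | Sum.inr (a, s), Sum.inr (b, t) => a < b ∨ (a = b ∧ s < t)

/-- `y` is an originally ranked (acceptable) agent of `a`, viewed inside `I'`. -/
def inList (accept : A → A → Prop) (k : ℕ) (a : A) (y : A' A k) : Prop :=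
  ∃ b, y = Sum.inl b ∧ accept a b

/-- `y` is one of `a`'s own `k` dummy agents. -/
def isDummyOf (k : ℕ) (a : A) (y : A' A k) : Prop :=
  ∃ s : Fin k, y = Sum.inr (a, s)

/-- Preferences in the completed instance `I'`.  An original agent `a` ranks: first its
original list (in its original order `pref a`), then its own `k` dummies (in order of
their index), then all remaining agents according to the global order.  A dummy of `a`
ranks `a` first and then all remaining agents according to the global order. -/
def pref' [LinearOrder A] (accept : A → A → Prop) (pref : A → A → A → Prop) (k : ℕ) :
    A' A k → A' A k → A' A k → Prop
  | Sum.inl a, y, z =>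
      (∃ b c, y = Sum.inl b ∧ z = Sum.inl c ∧ pref a b c) ∨
      (inList accept k a y ∧ ¬ inList accept k a z) ∨
      (∃ s t : Fin k, y = Sum.inr (a, s) ∧ z = Sum.inr (a, t) ∧ s < t) ∨
      (isDummyOf k a y ∧ ¬ inList accept k a z ∧ ¬ isDummyOf k a z) ∨
      (¬ inList accept k a y ∧ ¬ isDummyOf k a y ∧
        ¬ inList accept k a z ∧ ¬ isDummyOf k a z ∧ gOrd k y z)
  | Sum.inr (a, _), y, z =>
      (y = Sum.inl a ∧ z ≠ Sum.inl a) ∨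
      (y ≠ Sum.inl a ∧ z ≠ Sum.inl a ∧ gOrd k y z)

/-- Blocking pair in `I` (matchings are involutions; `M a = a` means `a` is unmatched). -/
def blocksI (accept : A → A → Prop) (pref : A → A → A → Prop)
    (M : A → A) (a b : A) : Prop :=
  accept a b ∧ (M a = a ∨ pref a b (M a)) ∧ (M b = b ∨ pref b a (M b))

/-- Blocking pair in the completed instance `I'`, where every pair of distinct agents
is mutually acceptable. -/
def blocksI' [LinearOrder A] (accept : A → A → Prop) (pref : A → A → A → Prop) (k : ℕ)
    (M : A' A k → A' A k) (x y : A' A k) : Prop :=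
  x ≠ y ∧ (M x = x ∨ pref' accept pref k x y (M x)) ∧
    (M y = y ∨ pref' accept pref k y x (M y))

/-- `f` is a stable matching (as an involution, fixed points unmatched) of the agents in `P`
when all of them rank each other by the common key `rank`, smaller keys being better. -/
structure IsMasterListStable {β γ : Type*} [LinearOrder γ] (rank : β → γ) (P : Set β)
    (f : β → β) : Prop where
  involutive : Function.Involutive f
  eq_self_of_notMem : ∀ x ∉ P, f x = x
  not_blocking : ∀ x ∈ P, ∀ y ∈ P, x ≠ y → (f x = x ∨ rank y < rank (f x)) →
    ¬ (f y = y ∨ rank x < rank (f y))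

namespace IsMasterListStable

variable {β γ : Type*} [LinearOrder γ]

theorem mapsTo {rank : β → γ} {P : Set β} {f : β → β} (hf : IsMasterListStable rank P f) :
    Set.MapsTo f P P := by
  intro x hx
  by_contra h
  have hfx := hf.eq_self_of_notMem _ h
  rw [hf.involutive x] at hfx
  exact h (hfx ▸ hx)

/-- Greedy construction: match the two best agents with each other and recurse. -/
theorem exists_of_finset (rank : β → γ) (P : Finset β) :
    ∃ f, IsMasterListStable rank (P : Set β) f := by
  classical
  induction P using Finset.strongInduction with | H P ih => ?_
  by_cases hP : P.card ≤ 1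
  · exact ⟨id, ⟨fun _ => rfl, fun _ _ => rfl,
      fun x hx y hy hxy => absurd (Finset.card_le_one.1 hP x hx y hy) hxy⟩⟩
  obtain ⟨m₁, hm₁, hmin₁⟩ := P.exists_min_image rank (Finset.card_pos.1 (by omega))
  obtain ⟨m₂, hm₂, hmin₂⟩ := (P.erase m₁).exists_min_image rank
    (Finset.card_pos.1 (by rw [Finset.card_erase_of_mem hm₁]; omega))
  obtain ⟨f, hinv, hout, hst⟩ := ih ((P.erase m₁).erase m₂)
    ((Finset.erase_ssubset hm₂).trans (Finset.erase_ssubset hm₁))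
  have hm₁₂ : m₂ ≠ m₁ := (Finset.mem_erase.1 hm₂).1
  have hf₁ : f m₁ = m₁ := hout m₁ (by simp)
  have hf₂ : f m₂ = m₂ := hout m₂ (by simp)
  let g x := if x = m₁ then m₂ else if x = m₂ then m₁ else f x
  have htop : ∀ x ∈ P, ∀ y ∈ P, x ≠ y → x = m₁ ∨ x = m₂ →
      ¬ (g x = x ∨ rank y < rank (g x)) := by
    rintro x - y hy hxy (rfl | rfl) (h | h)
    · exact hm₁₂ (by simpa [g] using h)
    · rcases eq_or_ne y m₂ with rfl | hy₂
      · simp [g] at h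
      · exact (hmin₂ y (Finset.mem_erase.2 ⟨hxy.symm, hy⟩)).not_gt (by simpa [g] using h)
    · exact hm₁₂ (Eq.symm (by simpa [g, hm₁₂] using h))
    · exact (hmin₁ y hy).not_gt (by simpa [g, hm₁₂] using h)
  refine ⟨g, ⟨fun x => ?_, fun x hx => ?_, fun x hx y hy hxy => ?_⟩⟩
  · by_cases h₁ : x = m₁
    · simp [g, h₁, hm₁₂]
    by_cases h₂ : x = m₂
    · simp [g, h₂, hm₁₂]
    have : f x ≠ m₁ := fun h => h₁ (by rw [← hinv x, h, hf₁])
    have : f x ≠ m₂ := fun h => h₂ (by rw [← hinv x, h, hf₂])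
    simp [g, *, hinv x]
  · have h₁ : x ≠ m₁ := by rintro rfl; exact hx hm₁
    have h₂ : x ≠ m₂ := by rintro rfl; exact hx (Finset.mem_of_mem_erase hm₂)
    simp [g, h₁, h₂, hout x (by simp [hx])]
  · by_cases hx' : x = m₁ ∨ x = m₂
    · exact fun h _ => htop x hx y hy hxy hx' h
    by_cases hy' : y = m₁ ∨ y = m₂
    · exact fun _ => htop y hy x hx (Ne.symm hxy) hy'
    push Not at hx' hy'
    simpa [g, hx', hy'] using hst x (by simp [*]) y (by simp [*]) hxy

end IsMasterListStable

section GlobalOrder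

variable [LinearOrder A] {k : ℕ}

def gKey (k : ℕ) : A' A k → A ×ₗ ℕ
  | Sum.inl a => toLex (a, 0)
  | Sum.inr (a, s) => toLex (a, s + 1)

theorem gOrd_iff_gKey_lt {x y : A' A k} : gOrd k x y ↔ gKey k x < gKey k y := by
  rcases x with a | ⟨a, s⟩ <;> rcases y with b | ⟨b, t⟩ <;>
    simp [gOrd, gKey, Prod.Lex.toLex_lt_toLex, le_iff_lt_or_eq (α := A)]

end GlobalOrder

section LiftMatching

variable [DecidableEq A] {k : ℕ} {M : A → A}

def liftMatching (M : A → A) (k : ℕ) : A' A k → A' A k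
  | Sum.inl a =>
      if M a ≠ a then Sum.inl (M a) else if hk : 0 < k then Sum.inr (a, ⟨0, hk⟩) else Sum.inl a
  | Sum.inr (a, s) => if M a = a ∧ s.val = 0 then Sum.inl a else Sum.inr (a, s)

theorem liftMatching_inl_of_ne {a : A} (h : M a ≠ a) :
    liftMatching M k (Sum.inl a) = Sum.inl (M a) := by
  simp [liftMatching, h]

theorem liftMatching_inl_eq_self_iff {a : A} :
    liftMatching M k (Sum.inl a) = Sum.inl a ↔ M a = a ∧ k = 0 := by
  by_cases h : M a = a <;> by_cases hk : 0 < k <;> simp [liftMatching, h, hk] <;> omega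

theorem liftMatching_involutive (hM : Function.Involutive M) :
    Function.Involutive (liftMatching M k) := by
  rintro (a | ⟨a, s⟩)
  · by_cases h : M a = a
    · by_cases hk : 0 < k <;> simp [liftMatching, h, hk]
    · have h' : M (M a) ≠ M a := by rw [hM a]; exact Ne.symm h
      rw [liftMatching_inl_of_ne h, liftMatching_inl_of_ne h', hM a]
  · by_cases h : M a = a ∧ s.val = 0
    · have hk : 0 < k := s.pos
      simp [liftMatching, h.1, h.2, hk, Fin.ext_iff]
    · simp [liftMatching, h]

def completeMatching (M : A → A) (f : A' A k → A' A k) (x : A' A k) : A' A k :=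
  if liftMatching M k x = x then f x else liftMatching M k x

theorem completeMatching_of_eq {f : A' A k → A' A k} {x : A' A k}
    (hx : liftMatching M k x = x) : completeMatching M f x = f x :=
  if_pos hx

theorem completeMatching_of_ne {f : A' A k → A' A k} {x : A' A k}
    (hx : liftMatching M k x ≠ x) : completeMatching M f x = liftMatching M k x :=
  if_neg hx

theorem completeMatching_involutive {γ : Type*} [LinearOrder γ] {rank : A' A k → γ}
    {f : A' A k → A' A k} (hM : Function.Involutive M)
    (hf : IsMasterListStable rank {x | liftMatching M k x = x} f) :
    Function.Involutive (completeMatching M f) := by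
  intro x
  by_cases hx : liftMatching M k x = x
  · have hfx : liftMatching M k (f x) = f x := hf.mapsTo hx
    rw [completeMatching_of_eq hx, completeMatching_of_eq hfx, hf.involutive x]
  · have hlx : liftMatching M k (liftMatching M k x) ≠ liftMatching M k x := by
      rw [liftMatching_involutive hM x]; exact Ne.symm hx
    rw [completeMatching_of_ne hx, completeMatching_of_ne hlx, liftMatching_involutive hM x]

end LiftMatching

section Preferences

variable [LinearOrder A] {k : ℕ} {accept : A → A → Prop} {pref : A → A → A → Prop}

theorem pref'_inl_of_inList {a c : A} {y : A' A k} (hc : accept a c)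
    (h : pref' accept pref k (Sum.inl a) y (Sum.inl c)) : ∃ b, y = Sum.inl b ∧ pref a b c := by
  rcases h with ⟨b, c', rfl, hc', hp⟩ | ⟨-, h⟩ | ⟨s, t, -, h, -⟩ | ⟨-, h, -⟩ | ⟨-, -, h, -⟩
  · cases hc'; exact ⟨b, rfl, hp⟩
  · exact absurd ⟨c, rfl, hc⟩ h
  · cases h
  all_goals exact absurd ⟨c, rfl, hc⟩ h

theorem inList_of_pref'_firstDummy {a : A} {y : A' A k} (hk : 0 < k)
    (h : pref' accept pref k (Sum.inl a) y (Sum.inr (a, ⟨0, hk⟩))) : inList accept k a y := by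
  rcases h with ⟨b, c, -, h, -⟩ | ⟨hy, -⟩ | ⟨s, t, -, h, hst⟩ | ⟨-, -, h⟩ | ⟨-, -, -, h, -⟩
  · cases h
  · exact hy
  · cases h; exact (Nat.not_lt_zero _ hst).elim
  all_goals exact absurd ⟨⟨0, hk⟩, rfl⟩ h

theorem pref'_inl_of_not_inList (pref_acc : ∀ a b c, pref a b c → accept a b ∧ accept a c)
    {a : A} {y z : A' A k} (hz : ¬ inList accept k a z)
    (h : pref' accept pref k (Sum.inl a) y z) :
    inList accept k a y ∨ isDummyOf k a y ∨ gOrd k y z := by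
  rcases h with ⟨b, c, -, rfl, hp⟩ | ⟨hy, -⟩ | ⟨s, t, rfl, -, -⟩ | ⟨hy, -⟩ | ⟨-, -, -, -, h⟩
  · exact absurd ⟨c, rfl, (pref_acc a b c hp).2⟩ hz
  · exact Or.inl hy
  · exact Or.inr (Or.inl ⟨s, rfl⟩)
  · exact Or.inr (Or.inl hy)
  · exact Or.inr (Or.inr h)

theorem pref'_inr {a : A} {s : Fin k} {y z : A' A k}
    (h : pref' accept pref k (Sum.inr (a, s)) y z) :
    z ≠ Sum.inl a ∧ (y = Sum.inl a ∨ gOrd k y z) := by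
  rcases h with ⟨hy, hz⟩ | ⟨-, hz, h⟩
  exacts [⟨hz, Or.inl hy⟩, ⟨hz, Or.inr h⟩]

end Preferences

section Completion

variable [LinearOrder A] {k : ℕ} {accept : A → A → Prop} {pref : A → A → A → Prop}
  {M : A → A} {f : A' A k → A' A k}

/-- The ways in which `x` can prefer `y` to its partner in `completeMatching M f`: as an
agent of `I` on one side of a blocking pair of `M`, as an agent left single by
`liftMatching M k` (and then paired by the global order), or as a dummy of `y`. -/
def BlockingSide (accept : A → A → Prop) (pref : A → A → A → Prop) (M : A → A)
    (f : A' A k → A' A k) (x y : A' A k) : Prop :=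
  (∃ a b, x = Sum.inl a ∧ y = Sum.inl b ∧ accept a b ∧ (M a = a ∨ pref a b (M a))) ∨
  (liftMatching M k x = x ∧ (f x = x ∨ gOrd k y (f x))) ∨
  (∃ a s, x = Sum.inr (a, s) ∧ y = Sum.inl a)

theorem blockingSide_of_liftMatching_eq
    (pref_acc : ∀ a b c, pref a b c → accept a b ∧ accept a c)
    (hstab : k = 0 → ∀ a b, ¬ blocksI accept pref M a b)
    (hf : IsMasterListStable (gKey k) {x | liftMatching M k x = x} f) {x y : A' A k}
    (hx : liftMatching M k x = x) (h : f x = x ∨ pref' accept pref k x y (f x)) :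
    BlockingSide accept pref M f x y := by
  rcases h with h | h
  · exact Or.inr (Or.inl ⟨hx, Or.inl h⟩)
  rcases x with a | ⟨a, s⟩
  · obtain ⟨hMa, rfl⟩ := liftMatching_inl_eq_self_iff.1 hx
    rcases hfa : f (Sum.inl a) with u | ⟨-, t⟩
    · have hMu : M u = u := (liftMatching_inl_eq_self_iff.1 (hfa ▸ hf.mapsTo hx)).1
      have hau : ¬ inList accept 0 a (Sum.inl u) := by
        rintro ⟨c, hc, hac⟩
        rw [Sum.inl_injective hc] at hMu
        exact hstab rfl a c ⟨hac, Or.inl hMa, Or.inl hMu⟩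
      rw [hfa] at h
      rcases pref'_inl_of_not_inList pref_acc hau h with ⟨b, rfl, hab⟩ | ⟨t, -⟩ | h
      · exact Or.inl ⟨a, b, rfl, rfl, hab, Or.inl hMa⟩
      · exact t.elim0
      · exact Or.inr (Or.inl ⟨hx, Or.inr (hfa ▸ h)⟩)
    · exact t.elim0
  · rcases (pref'_inr h).2 with rfl | h
    · exact Or.inr (Or.inr ⟨a, s, rfl, rfl⟩)
    · exact Or.inr (Or.inl ⟨hx, Or.inr h⟩)

theorem blockingSide_of_liftMatching_ne (hMacc : ∀ a, M a ≠ a → accept a (M a))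
    (pref_acc : ∀ a b c, pref a b c → accept a b ∧ accept a c) {x y : A' A k}
    (hx : liftMatching M k x ≠ x) (h : pref' accept pref k x y (liftMatching M k x)) :
    BlockingSide accept pref M f x y := by
  rcases x with a | ⟨a, s⟩
  · by_cases hMa : M a = a
    · have hk : 0 < k := Nat.pos_of_ne_zero fun hk =>
        hx (liftMatching_inl_eq_self_iff.2 ⟨hMa, hk⟩)
      have hl : liftMatching M k (Sum.inl a) = Sum.inr (a, ⟨0, hk⟩) := by
        simp [liftMatching, hMa, hk]
      rw [hl] at h
      obtain ⟨b, rfl, hab⟩ := inList_of_pref'_firstDummy hk h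
      exact Or.inl ⟨a, b, rfl, rfl, hab, Or.inl hMa⟩
    · rw [liftMatching_inl_of_ne hMa] at h
      obtain ⟨b, rfl, hp⟩ := pref'_inl_of_inList (hMacc a hMa) h
      exact Or.inl ⟨a, b, rfl, rfl, (pref_acc a b _ hp).1, Or.inr hp⟩
  · have hs : M a = a ∧ s.val = 0 := by
      by_contra hs
      exact hx (by simp [liftMatching, hs])
    have hl : liftMatching M k (Sum.inr (a, s)) = Sum.inl a := by simp [liftMatching, hs]
    rw [hl] at h
    exact absurd rfl (pref'_inr h).1

theorem exists_blocksI_of_blockingSide (accept_symm : ∀ a b, accept a b → accept b a)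
    (hf : IsMasterListStable (gKey k) {x | liftMatching M k x = x} f) {x y : A' A k}
    (hxy : x ≠ y) (hx : BlockingSide accept pref M f x y)
    (hy : BlockingSide accept pref M f y x) :
    ∃ a b, x = Sum.inl a ∧ y = Sum.inl b ∧ blocksI accept pref M a b := by
  rcases hx with ⟨a, b, rfl, rfl, hab, ha⟩ | ⟨hxP, hx⟩ | ⟨a, s, rfl, rfl⟩ <;>
    rcases hy with ⟨b', a', hy, hx', hba, hb⟩ | ⟨hyP, hy⟩ | ⟨b', t, hy, hx'⟩
  · cases hy; cases hx'
    exact ⟨a, b, rfl, rfl, hab, ha, hb⟩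
  · exact ⟨a, b, rfl, rfl, hab, ha, Or.inl (liftMatching_inl_eq_self_iff.1 hyP).1⟩
  · cases hy
  · subst hy hx'
    exact ⟨a', b', rfl, rfl, accept_symm b' a' hba,
      Or.inl (liftMatching_inl_eq_self_iff.1 hxP).1, hb⟩
  · rw [gOrd_iff_gKey_lt] at hx hy
    exact (hf.not_blocking x hxP y hyP hxy hx hy).elim
  · subst hx'
    rw [(liftMatching_inl_eq_self_iff.1 hxP).2] at t
    exact t.elim0
  · cases hx'
  · rw [(liftMatching_inl_eq_self_iff.1 hyP).2] at s
    exact s.elim0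
  · cases hy

theorem exists_blocksI_of_blocksI'_completeMatching
    (hMacc : ∀ a, M a ≠ a → accept a (M a))
    (accept_symm : ∀ a b, accept a b → accept b a)
    (pref_acc : ∀ a b c, pref a b c → accept a b ∧ accept a c)
    (hstab : k = 0 → ∀ a b, ¬ blocksI accept pref M a b)
    (hf : IsMasterListStable (gKey k) {x | liftMatching M k x = x} f) {x y : A' A k}
    (h : blocksI' accept pref k (completeMatching M f) x y) :
    ∃ a b, x = Sum.inl a ∧ y = Sum.inl b ∧ blocksI accept pref M a b := by
  have side : ∀ {x y}, (completeMatching M f x = x ∨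
      pref' accept pref k x y (completeMatching M f x)) → BlockingSide accept pref M f x y := by
    intro x y h
    by_cases hx : liftMatching M k x = x
    · rw [completeMatching_of_eq hx] at h
      exact blockingSide_of_liftMatching_eq pref_acc hstab hf hx h
    · rw [completeMatching_of_ne hx] at h
      exact blockingSide_of_liftMatching_ne hMacc pref_acc hx (h.resolve_left hx)
  exact exists_blocksI_of_blockingSide accept_symm hf h.1 (side h.2.1) (side h.2.2)

theorem exists_involutive_blocking_subset [Fintype A] (hM : Function.Involutive M)
    (hMacc : ∀ a, M a ≠ a → accept a (M a))
    (accept_symm : ∀ a b, accept a b → accept b a)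
    (pref_acc : ∀ a b c, pref a b c → accept a b ∧ accept a c)
    (hstab : k = 0 → ∀ a b, ¬ blocksI accept pref M a b) :
    ∃ M' : A' A k → A' A k, Function.Involutive M' ∧
      {x | ∃ y, blocksI' accept pref k M' x y} ⊆
        Sum.inl '' {a | ∃ b, blocksI accept pref M a b} := by
  obtain ⟨f, hf⟩ := IsMasterListStable.exists_of_finset (gKey k)
    (Set.toFinite {x : A' A k | liftMatching M k x = x}).toFinset
  rw [Set.Finite.coe_toFinset] at hf
  refine ⟨completeMatching M f, completeMatching_involutive hM hf, ?_⟩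
  rintro x ⟨y, h⟩
  obtain ⟨a, b, rfl, -, hab⟩ :=
    exists_blocksI_of_blocksI'_completeMatching hMacc accept_symm pref_acc hstab hf h
  exact ⟨a, ⟨b, hab⟩, rfl⟩

end Completion

section Restriction

variable {k : ℕ} {accept : A → A → Prop} {M' : A' A k → A' A k} {a : A}

open scoped Classical in
noncomputable def restrictMatching (accept : A → A → Prop) (M' : A' A k → A' A k) (a : A) : A :=
  Sum.elim (fun b => if accept a b then b else a) (fun _ => a) (M' (Sum.inl a))

theorem restrictMatching_spec (h : inList accept k a (M' (Sum.inl a))) :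
    M' (Sum.inl a) = Sum.inl (restrictMatching accept M' a) ∧
      accept a (restrictMatching accept M' a) := by
  obtain ⟨b, hb, hab⟩ := h
  simp [restrictMatching, hb, hab]

theorem restrictMatching_of_not_inList (h : ¬ inList accept k a (M' (Sum.inl a))) :
    restrictMatching accept M' a = a := by
  rcases hb : M' (Sum.inl a) with b | p
  · have hab : ¬ accept a b := fun hab => h ⟨b, hb, hab⟩
    simp [restrictMatching, hb, hab]
  · simp [restrictMatching, hb]

theorem inList_of_restrictMatching_ne (h : restrictMatching accept M' a ≠ a) :
    inList accept k a (M' (Sum.inl a)) :=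
  not_not.1 (mt restrictMatching_of_not_inList h)

theorem restrictMatching_involutive (accept_symm : ∀ a b, accept a b → accept b a)
    (hM' : Function.Involutive M') : Function.Involutive (restrictMatching accept M') := by
  intro a
  by_cases h : restrictMatching accept M' a = a
  · rw [h, h]
  obtain ⟨hb, hab⟩ := restrictMatching_spec (inList_of_restrictMatching_ne h)
  have hba : M' (Sum.inl (restrictMatching accept M' a)) = Sum.inl a := by rw [← hb, hM']
  have := (restrictMatching_spec ⟨a, hba, accept_symm _ _ hab⟩).1
  exact Sum.inl_injective (this.symm.trans hba)

variable [LinearOrder A] {pref : A → A → A → Prop} {b : A}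

theorem prefers_of_restrictMatching (hab : accept a b)
    (h : restrictMatching accept M' a = a ∨ pref a b (restrictMatching accept M' a)) :
    M' (Sum.inl a) = Sum.inl a ∨ pref' accept pref k (Sum.inl a) (Sum.inl b) (M' (Sum.inl a)) := by
  by_cases hin : inList accept k a (M' (Sum.inl a))
  · rw [(restrictMatching_spec hin).1]
    rcases h with h | h
    · exact Or.inl (by rw [h])
    · exact Or.inr (Or.inl ⟨b, _, rfl, rfl, h⟩)
  · exact Or.inr (Or.inr (Or.inl ⟨⟨b, rfl, hab⟩, hin⟩))

theorem blocksI'_of_blocksI (accept_symm : ∀ a b, accept a b → accept b a)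
    (accept_irrefl : ∀ a, ¬ accept a a)
    (h : blocksI accept pref (restrictMatching accept M') a b) :
    blocksI' accept pref k M' (Sum.inl a) (Sum.inl b) := by
  obtain ⟨hab, ha, hb⟩ := h
  refine ⟨fun h => accept_irrefl a ?_, prefers_of_restrictMatching hab ha,
    prefers_of_restrictMatching (accept_symm a b hab) hb⟩
  rwa [Sum.inl_injective h] at hab ⊢

end Restriction

theorem stmt18_general [Fintype A] [LinearOrder A] (k : ℕ)
    (accept : A → A → Prop) (pref : A → A → A → Prop)
    (accept_symm : ∀ a b, accept a b → accept b a)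
    (accept_irrefl : ∀ a, ¬ accept a a)
    (pref_acc : ∀ a b c, pref a b c → accept a b ∧ accept a c) :
    (∃ M : A → A, Function.Involutive M ∧ (∀ a, M a ≠ a → accept a (M a)) ∧
        {a : A | ∃ b, blocksI accept pref M a b}.ncard ≤ k) ↔
    (∃ M' : A' A k → A' A k, Function.Involutive M' ∧
        {x : A' A k | ∃ y, blocksI' accept pref k M' x y}.ncard ≤ k) := by
  constructor
  · rintro ⟨M, hM, hMacc, hcard⟩
    have hstab : k = 0 → ∀ a b, ¬ blocksI accept pref M a b := by
      rintro rfl a b hab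
      have hempty := (Set.ncard_eq_zero (Set.toFinite _)).1 (Nat.le_zero.1 hcard)
      exact hempty.subset ⟨b, hab⟩
    obtain ⟨M', hM', hsub⟩ :=
      exists_involutive_blocking_subset hM hMacc accept_symm pref_acc hstab
    refine ⟨M', hM', ?_⟩
    calc _ ≤ (Sum.inl '' {a | ∃ b, blocksI accept pref M a b}).ncard :=
          Set.ncard_le_ncard hsub (Set.toFinite _)
      _ = _ := Set.ncard_image_of_injective _ Sum.inl_injective
      _ ≤ k := hcard
  · rintro ⟨M', hM', hcard⟩
    refine ⟨restrictMatching accept M', restrictMatching_involutive accept_symm hM',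
      fun a h => (restrictMatching_spec (inList_of_restrictMatching_ne h)).2, ?_⟩
    refine le_trans (Set.ncard_le_ncard_of_injOn Sum.inl ?_ Sum.inl_injective.injOn) hcard
    rintro a ⟨b, h⟩
    exact ⟨Sum.inl b, blocksI'_of_blocksI accept_symm accept_irrefl h⟩

/-- Let `I` be a Stable Roommates instance with incomplete (strict) preference lists and
let `k ≥ 0`.  Construct `I'` by adding `k` dummy agents per agent as above and completing
all preference lists via the global order.  Then `I` admits a matching with at most `k`
blocking agents iff `I'` admits a matching with at most `k` blocking agents. -/
theorem stmt18 [Fintype A] [LinearOrder A] (k : ℕ)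
    (accept : A → A → Prop) (pref : A → A → A → Prop)
    (accept_symm : ∀ a b, accept a b → accept b a)
    (accept_irrefl : ∀ a, ¬ accept a a)
    (pref_acc : ∀ a b c, pref a b c → accept a b ∧ accept a c)
    (pref_trans : ∀ a, Transitive (pref a))
    (pref_asymm : ∀ a b c, pref a b c → ¬ pref a c b)
    (pref_total : ∀ a b c, accept a b → accept a c → b ≠ c → pref a b c ∨ pref a c b) :
    (∃ M : A → A, Function.Involutive M ∧ (∀ a, M a ≠ a → accept a (M a)) ∧
        {a : A | ∃ b, blocksI accept pref M a b}.ncard ≤ k) ↔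
    (∃ M' : A' A k → A' A k, Function.Involutive M' ∧
        {x : A' A k | ∃ y, blocksI' accept pref k M' x y}.ncard ≤ k) :=
  stmt18_general k accept pref accept_symm accept_irrefl pref_acc

end Stmt18
end
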